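/- Let P be a bichromatic convex point set with n red and n blue points whose coloring is alternating. Then P admits no straight-line bichromatic perfect matching with exactly 1 crossing and no straight-line bichromatic perfect matching with exactly 2 crossings. -/
import Mathlib


open Finset

/-- Two closed-segment edges cross: their open segments (relative interiors) intersect. -/
def SegCross (a b c d : ℝ × ℝ) : Prop :=
  ∃ x : ℝ × ℝ, x ∈ openSegment ℝ a b ∧ x ∈ openSegment ℝ c d

/-- `f` is a straight-line bichromatic perfect matching on points indexed by `Fin m`
with coloring `c` (`true` = red, `false` = blue): it is a fixed-point-free involution
matching points of different colors. -/
def IsBPM (m : ℕ) (c : Fin m → Bool) (f : Fin m → Fin m) : Prop :=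
  Function.Involutive f ∧ (∀ i, f i ≠ i) ∧ (∀ i, c (f i) ≠ c i)

/-- Number of crossing pairs of edges of the matching `f` on the points `p`:
each edge is represented by its smaller endpoint. -/
noncomputable def crNum (m : ℕ) (p : Fin m → ℝ × ℝ) (f : Fin m → Fin m) : ℕ :=
  Nat.card {q : Fin m × Fin m // q.1 < q.2 ∧ q.1 < f q.1 ∧ q.2 < f q.2 ∧
    SegCross (p q.1) (p (f q.1)) (p q.2) (p (f q.2))}

/-- The points `p 0, p 1, …` are distinct and in strictly convex position,
listed in clockwise order (every triple is negatively oriented). -/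
def ConvexCW (m : ℕ) (p : Fin m → ℝ × ℝ) : Prop :=
  Function.Injective p ∧
  ∀ i j k : Fin m, (i : ℕ) < (j : ℕ) → (j : ℕ) < (k : ℕ) →
    ((p j).1 - (p i).1) * ((p k).2 - (p i).2) -
      ((p j).2 - (p i).2) * ((p k).1 - (p i).1) < 0

/-- The points are distinct and in general position: no three collinear. -/
def GenPos (m : ℕ) (p : Fin m → ℝ × ℝ) : Prop :=
  Function.Injective p ∧
  ∀ i j k : Fin m, i ≠ j → i ≠ k → j ≠ k →
    ¬ Collinear ℝ ({p i, p j, p k} : Set (ℝ × ℝ))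

/-- The coloring has exactly `n` red points (hence `n` blue points among the `2n`). -/
def Bichrom (n : ℕ) (c : Fin (2 * n) → Bool) : Prop :=
  (Finset.univ.filter fun i : Fin (2 * n) => c i = true).card = n

/-- The coloring alternates along the (cyclic) convex hull order. -/
def Alternating (m : ℕ) (c : Fin m → Bool) : Prop :=
  ∀ i j : Fin m, (j : ℕ) = ((i : ℕ) + 1) % m → c j ≠ c i

/-- The coloring is a 4-block coloring: starting at position `t` along the cyclic order,
there come `r1` red points, then `b1` blue, then `r2` red, then `b2` blue,
all four blocks nonempty. -/
def FourBlockAt (n : ℕ) (c : Fin (2 * n) → Bool) (t : Fin (2 * n))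
    (r1 b1 r2 b2 : ℕ) : Prop :=
  0 < r1 ∧ 0 < b1 ∧ 0 < r2 ∧ 0 < b2 ∧
  r1 + b1 + r2 + b2 = 2 * n ∧ r1 + r2 = n ∧
  ∀ j : Fin (2 * n), c (t + j) =
    if (j : ℕ) < r1 then true
    else if (j : ℕ) < r1 + b1 then false
    else if (j : ℕ) < r1 + b1 + r2 then true
    else false

/-- The coloring is a 4-block coloring (for some start and block sizes). -/
def FourBlock (n : ℕ) (c : Fin (2 * n) → Bool) : Prop :=
  ∃ t r1 b1 r2 b2, FourBlockAt n c t r1 b1 r2 b2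

/-- The coloring is a balanced 4-block coloring: any two block sizes differ by at most 1. -/
def Balanced4 (n : ℕ) (c : Fin (2 * n) → Bool) : Prop :=
  ∃ t r1 b1 r2 b2, FourBlockAt n c t r1 b1 r2 b2 ∧
    ∀ x ∈ [r1, b1, r2, b2], ∀ y ∈ [r1, b1, r2, b2], x ≤ y + 1

/-- The value `3n²/8 − n/2 + c` with `c` depending on `n mod 4`. -/
def maxCrBound (n : ℕ) : ℚ :=
  3 * (n : ℚ) ^ 2 / 8 - (n : ℚ) / 2 +
    (if n % 4 = 0 then 0 else if n % 4 = 2 then -(1 / 2 : ℚ) else 1 / 8)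

/-- `i` and `j` lie in the same monochromatic block: there is a cyclic arc from `i` to
`j` consisting of points of the color of `i`. -/
def SameBlockArc (m : ℕ) (c : Fin m → Bool) (i j : Fin m) : Prop :=
  ∃ d : Fin m, j = i + d ∧ ∀ e : Fin m, e ≤ d → c (i + e) = c i

section Stmt11Aux

noncomputable def Dor (a b c : ℝ × ℝ) : ℝ :=
  (b.1 - a.1) * (c.2 - a.2) - (b.2 - a.2) * (c.1 - a.1)

lemma Dor_swap23 (a b c : ℝ × ℝ) : Dor a c b = - Dor a b c := by
  simp only [Dor]; ring

lemma Dor_cycle (a b c : ℝ × ℝ) : Dor b c a = Dor a b c := by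
  simp only [Dor]; ring

lemma Dor_self (a b : ℝ × ℝ) : Dor a b a = 0 ∧ Dor a b b = 0 := by
  constructor <;> (simp only [Dor]; ring)

lemma Dor_affine (a b c d : ℝ × ℝ) (t : ℝ) :
    Dor a b ((1 - t) • c + t • d) = (1 - t) * Dor a b c + t * Dor a b d := by
  simp only [Dor, Prod.smul_fst, Prod.smul_snd, Prod.fst_add, Prod.snd_add, smul_eq_mul]
  ring

lemma mem_openSegment_iff {a b x : ℝ × ℝ} :
    x ∈ openSegment ℝ a b ↔ ∃ t : ℝ, 0 < t ∧ t < 1 ∧ x = (1 - t) • a + t • b := by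
  rw [openSegment_eq_image]
  constructor
  · rintro ⟨t, ⟨h0, h1⟩, rfl⟩; exact ⟨t, h0, h1, rfl⟩
  · rintro ⟨t, h0, h1, rfl⟩; exact ⟨t, ⟨h0, h1⟩, rfl⟩

lemma sign_aux {t α β : ℝ} (h : (1 - t) * α + t * β = 0) (ht0 : 0 < t) (ht1 : t < 1)
    (hα : α ≠ 0) : α * β < 0 := by
  have hβ : β ≠ 0 := by
    rintro rfl
    have : (1 - t) * α = 0 := by linarith
    rcases mul_eq_zero.1 this with h' | h'
    · linarith
    · exact hα h'
  rcases lt_or_gt_of_ne hα with h1 | h1 <;> rcases lt_or_gt_of_ne hβ with h2 | h2 <;>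
    nlinarith

lemma sign_aux' {α β : ℝ} (h : α * β < 0) :
    ∃ t : ℝ, 0 < t ∧ t < 1 ∧ (1 - t) * α + t * β = 0 := by
  have hα : α ≠ 0 := by rintro rfl; rw [zero_mul] at h; exact lt_irrefl 0 h
  have hβ : β ≠ 0 := by rintro rfl; rw [mul_zero] at h; exact lt_irrefl 0 h
  have hd : α - β ≠ 0 := by
    rcases lt_or_gt_of_ne hα with h1 | h1
    · have : 0 < β := by nlinarith
      intro h'; linarith
    · have : β < 0 := by nlinarith
      intro h'; linarith
  refine ⟨α / (α - β), ?_, ?_, by field_simp; ring⟩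
  · rcases lt_or_gt_of_ne hα with h1 | h1
    · have hb : 0 < β := by nlinarith
      exact div_pos_iff.2 (Or.inr ⟨h1, by linarith⟩)
    · have hb : β < 0 := by nlinarith
      exact div_pos h1 (by linarith)
  · rw [div_lt_one_iff]
    rcases lt_or_gt_of_ne hα with h1 | h1
    · have hb : 0 < β := by nlinarith
      right; right; exact ⟨by linarith, by linarith⟩
    · have hb : β < 0 := by nlinarith
      left; exact ⟨by linarith, by linarith⟩

lemma collinear_param {a b x : ℝ × ℝ} (hab : a ≠ b) (h : Dor a b x = 0) :
    ∃ s : ℝ, x = (1 - s) • a + s • b := by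
  simp only [Dor] at h
  by_cases h1 : b.1 = a.1
  · have h2 : b.2 - a.2 ≠ 0 := by
      intro h2
      exact hab (Prod.ext h1.symm (by linarith))
    refine ⟨(x.2 - a.2) / (b.2 - a.2), ?_⟩
    apply Prod.ext <;>
      simp only [Prod.smul_fst, Prod.smul_snd, Prod.fst_add, Prod.snd_add, smul_eq_mul]
    · rw [h1] at h ⊢
      have : x.1 = a.1 := by
        rcases mul_eq_zero.1 (by linarith : (b.2 - a.2) * (x.1 - a.1) = 0) with h'|h'
        · exact absurd h' h2
        · linarith
      rw [this]; ring
    · field_simp; ring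
  · refine ⟨(x.1 - a.1) / (b.1 - a.1), ?_⟩
    have hne : b.1 - a.1 ≠ 0 := sub_ne_zero.2 h1
    apply Prod.ext <;>
      simp only [Prod.smul_fst, Prod.smul_snd, Prod.fst_add, Prod.snd_add, smul_eq_mul]
    · field_simp; ring
    · field_simp; nlinarith [h]

/-- Key geometric characterization. -/
lemma segCross_iff_signs {a b c d : ℝ × ℝ}
    (h1 : Dor a b c ≠ 0) (h2 : Dor a b d ≠ 0) (h3 : Dor c d a ≠ 0) (h4 : Dor c d b ≠ 0) :
    SegCross a b c d ↔ Dor a b c * Dor a b d < 0 ∧ Dor c d a * Dor c d b < 0 := by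
  constructor
  · rintro ⟨x, hx1, hx2⟩
    rw [mem_openSegment_iff] at hx1 hx2
    obtain ⟨s, hs0, hs1, rfl⟩ := hx1
    obtain ⟨t, ht0, ht1, hx⟩ := hx2
    constructor
    · have e1 : Dor a b ((1-t) • c + t • d) = 0 := by
        rw [← hx, Dor_affine, (Dor_self a b).1, (Dor_self a b).2]; ring
      rw [Dor_affine] at e1
      exact sign_aux e1 ht0 ht1 h1
    · have e1 : Dor c d ((1-s) • a + s • b) = 0 := by
        rw [hx, Dor_affine, (Dor_self c d).1, (Dor_self c d).2]; ring
      rw [Dor_affine] at e1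
      exact sign_aux e1 hs0 hs1 h3
  · rintro ⟨hab, hcd⟩
    obtain ⟨t, ht0, ht1, ht⟩ := sign_aux' hab
    set x : ℝ × ℝ := (1 - t) • c + t • d with hxdef
    have hx0 : Dor a b x = 0 := by rw [hxdef, Dor_affine, ht]
    have hne : a ≠ b := by
      rintro rfl
      exact absurd hcd (mul_self_nonneg _).not_gt
    obtain ⟨s, hs⟩ := collinear_param hne hx0
    have hdx : Dor c d x = 0 := by
      rw [hxdef, Dor_affine, (Dor_self c d).1, (Dor_self c d).2]; ring
    rw [hs, Dor_affine] at hdx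
    -- solve for s sign
    have hγ : Dor c d a ≠ 0 := h3
    have hδ : Dor c d b ≠ 0 := h4
    have hγ2 : 0 < Dor c d a * Dor c d a := mul_self_pos.2 hγ
    have hδ2 : 0 < Dor c d b * Dor c d b := mul_self_pos.2 hδ
    have key1 : (1 - s) * (Dor c d a * Dor c d a) + s * (Dor c d b * Dor c d a) = 0 := by
      linear_combination Dor c d a * hdx
    have key2 : (1 - s) * (Dor c d a * Dor c d b) + s * (Dor c d b * Dor c d b) = 0 := by
      linear_combination Dor c d b * hdx
    have hs' : 0 < s ∧ s < 1 := by
      constructor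
      · by_contra h'
        push_neg at h'
        nlinarith [key1, hcd, hγ2]
      · by_contra h'
        push_neg at h'
        nlinarith [key2, hcd, hδ2]
    refine ⟨x, ?_, ?_⟩
    · rw [mem_openSegment_iff]; exact ⟨s, hs'.1, hs'.2, hs⟩
    · rw [mem_openSegment_iff]; exact ⟨t, ht0, ht1, rfl⟩

section
variable {m : ℕ} {p : Fin m → ℝ × ℝ}

lemma Dor_sign_neg (hconv : ConvexCW m p) {a b c : Fin m}
    (h : ((a:ℕ)<(b:ℕ) ∧ (b:ℕ)<(c:ℕ)) ∨ ((b:ℕ)<(c:ℕ) ∧ (c:ℕ)<(a:ℕ)) ∨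
      ((c:ℕ)<(a:ℕ) ∧ (a:ℕ)<(b:ℕ))) : Dor (p a) (p b) (p c) < 0 := by
  rcases h with ⟨h1, h2⟩ | ⟨h1, h2⟩ | ⟨h1, h2⟩
  · exact hconv.2 a b c h1 h2
  · have h3 : Dor (p b) (p c) (p a) < 0 := hconv.2 b c a h1 h2
    linarith [Dor_cycle (p a) (p b) (p c)]
  · have h3 : Dor (p c) (p a) (p b) < 0 := hconv.2 c a b h1 h2
    linarith [Dor_cycle (p c) (p a) (p b)]

lemma Dor_sign_pos (hconv : ConvexCW m p) {a b c : Fin m}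
    (h : ((a:ℕ)<(c:ℕ) ∧ (c:ℕ)<(b:ℕ)) ∨ ((c:ℕ)<(b:ℕ) ∧ (b:ℕ)<(a:ℕ)) ∨
      ((b:ℕ)<(a:ℕ) ∧ (a:ℕ)<(c:ℕ))) : 0 < Dor (p a) (p b) (p c) := by
  have h3 : Dor (p a) (p c) (p b) < 0 := Dor_sign_neg hconv (by tauto)
  linarith [Dor_swap23 (p a) (p b) (p c)]

lemma Dor_ne (hconv : ConvexCW m p) {a b c : Fin m} (h1 : (a:ℕ) ≠ (b:ℕ)) (h2 : (a:ℕ) ≠ (c:ℕ))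
    (h3 : (b:ℕ) ≠ (c:ℕ)) : Dor (p a) (p b) (p c) ≠ 0 := by
  rcases Nat.lt_trichotomy (a:ℕ) (b:ℕ) with hab | hab | hab <;>
  rcases Nat.lt_trichotomy (b:ℕ) (c:ℕ) with hbc | hbc | hbc <;>
  rcases Nat.lt_trichotomy (a:ℕ) (c:ℕ) with hac | hac | hac <;>
  first
    | omega
    | exact ne_of_lt (Dor_sign_neg hconv (by omega))
    | exact ne_of_gt (Dor_sign_pos hconv (by omega))

lemma segCross_iff_interleave (hconv : ConvexCW m p) {i j k l : Fin m}
    (hij : (i:ℕ) < (j:ℕ)) (hkl : (k:ℕ) < (l:ℕ)) (hik : (i:ℕ) ≠ (k:ℕ))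
    (hil : (i:ℕ) ≠ (l:ℕ)) (hjk : (j:ℕ) ≠ (k:ℕ)) (hjl : (j:ℕ) ≠ (l:ℕ)) :
    SegCross (p i) (p j) (p k) (p l) ↔
      ((i:ℕ)<(k:ℕ) ∧ (k:ℕ)<(j:ℕ) ∧ (j:ℕ)<(l:ℕ)) ∨
      ((k:ℕ)<(i:ℕ) ∧ (i:ℕ)<(l:ℕ) ∧ (l:ℕ)<(j:ℕ)) := by
  rw [segCross_iff_signs
    (Dor_ne hconv (a := i) (b := j) (c := k) (by omega) (by omega) (by omega))
    (Dor_ne hconv (a := i) (b := j) (c := l) (by omega) (by omega) (by omega))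
    (Dor_ne hconv (a := k) (b := l) (c := i) (by omega) (by omega) (by omega))
    (Dor_ne hconv (a := k) (b := l) (c := j) (by omega) (by omega) (by omega))]
  rcases Nat.lt_or_ge (i:ℕ) (k:ℕ) with h1 | h1
  · rcases Nat.lt_or_ge (j:ℕ) (k:ℕ) with h2 | h2
    · -- i<j<k<l
      refine iff_of_false ?_ (by omega)
      rintro ⟨hP, -⟩
      have := mul_pos_of_neg_of_neg (Dor_sign_neg hconv (a := i) (b := j) (c := k) (by omega))
        (Dor_sign_neg hconv (a := i) (b := j) (c := l) (by omega))
      linarith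
    · rcases Nat.lt_or_ge (j:ℕ) (l:ℕ) with h3 | h3
      · -- i<k<j<l : crossing
        refine iff_of_true ⟨?_, ?_⟩ (by omega)
        · exact mul_neg_of_pos_of_neg (Dor_sign_pos hconv (by omega))
            (Dor_sign_neg hconv (by omega))
        · exact mul_neg_of_neg_of_pos (Dor_sign_neg hconv (by omega))
            (Dor_sign_pos hconv (by omega))
      · -- i<k<l<j
        refine iff_of_false ?_ (by omega)
        rintro ⟨hP, -⟩
        have := mul_pos (Dor_sign_pos hconv (a := i) (b := j) (c := k) (by omega))
          (Dor_sign_pos hconv (a := i) (b := j) (c := l) (by omega))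
        linarith
  · rcases Nat.lt_or_ge (l:ℕ) (i:ℕ) with h2 | h2
    · -- k<l<i<j
      refine iff_of_false ?_ (by omega)
      rintro ⟨hP, -⟩
      have := mul_pos_of_neg_of_neg (Dor_sign_neg hconv (a := i) (b := j) (c := k) (by omega))
        (Dor_sign_neg hconv (a := i) (b := j) (c := l) (by omega))
      linarith
    · rcases Nat.lt_or_ge (l:ℕ) (j:ℕ) with h3 | h3
      · -- k<i<l<j : crossing
        refine iff_of_true ⟨?_, ?_⟩ (by omega)
        · exact mul_neg_of_neg_of_pos (Dor_sign_neg hconv (by omega))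
            (Dor_sign_pos hconv (by omega))
        · exact mul_neg_of_pos_of_neg (Dor_sign_pos hconv (by omega))
            (Dor_sign_neg hconv (by omega))
      · -- k<i<j<l
        refine iff_of_false ?_ (by omega)
        rintro ⟨hP, -⟩
        have := mul_pos_of_neg_of_neg (Dor_sign_neg hconv (a := i) (b := j) (c := k) (by omega))
          (Dor_sign_neg hconv (a := i) (b := j) (c := l) (by omega))
        linarith
  end


lemma even_card_invol {α : Type*} [DecidableEq α] (g : α → α) (s : Finset α)
    (hmem : ∀ x ∈ s, g x ∈ s) (hinv : ∀ x ∈ s, g (g x) = x) (hne : ∀ x ∈ s, g x ≠ x) :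
    Even s.card := by
  induction s using Finset.strongInduction with
  | _ s ih =>
    rcases s.eq_empty_or_nonempty with rfl | ⟨x, hx⟩
    · simp
    · have hgx := hmem x hx
      have hxg : g x ≠ x := hne x hx
      have hsub : ({x, g x} : Finset α) ⊆ s := by
        intro y hy
        simp only [Finset.mem_insert, Finset.mem_singleton] at hy
        rcases hy with rfl | rfl
        · exact hx
        · exact hgx
      have hpair : ({x, g x} : Finset α).card = 2 := Finset.card_pair (Ne.symm hxg)
      have hts : s \ {x, g x} ⊂ s := by
        apply Finset.sdiff_ssubset hsub
        simp
      have hcard : (s \ {x, g x}).card = s.card - 2 := by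
        rw [Finset.card_sdiff_of_subset hsub, hpair]
      have h2 : 2 ≤ s.card := hpair ▸ Finset.card_le_card hsub
      have heven : Even ((s \ {x, g x}).card) := by
        refine ih _ hts ?_ ?_ ?_
        · intro y hy
          simp only [Finset.mem_sdiff, Finset.mem_insert, Finset.mem_singleton,
            not_or] at hy ⊢
          obtain ⟨hys, hy1, hy2⟩ := hy
          refine ⟨hmem y hys, ?_, ?_⟩
          · intro h'; exact hy2 (by rw [← hinv y hys, h'])
          · intro h'
            exact hy1 (by
              have := congrArg g h'
              rwa [hinv y hys, hinv x hx] at this)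
        · intro y hy; exact hinv y (Finset.mem_sdiff.1 hy).1
        · intro y hy; exact hne y (Finset.mem_sdiff.1 hy).1
      have : s.card = (s \ {x, g x}).card + 2 := by omega
      rw [this]
      exact heven.add even_two

lemma alt_parity_ne {m : ℕ} {c : Fin m → Bool} (halt : Alternating m c)
    {x y : Fin m} (hc : c x ≠ c y) : (x:ℕ) % 2 ≠ (y:ℕ) % 2 := by
  have hm : 0 < m := x.pos
  have key : ∀ (k : ℕ) (h : k < m),
      c ⟨k, h⟩ = if k % 2 = 0 then c ⟨0, hm⟩ else !c ⟨0, hm⟩ := by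
    intro k
    induction k with
    | zero => intro h; simp
    | succ k ih =>
      intro h
      have hk : k < m := by omega
      have hstep := halt ⟨k, hk⟩ ⟨k + 1, h⟩ (by simp [Nat.mod_eq_of_lt h])
      rw [ih hk] at hstep
      by_cases hk2 : k % 2 = 0
      · have : (k + 1) % 2 ≠ 0 := by omega
        simp only [hk2, if_pos rfl, this, if_neg, if_false] at hstep ⊢
        cases hcb : c ⟨0, hm⟩ <;> cases hcx : c ⟨k+1, h⟩ <;> simp_all
      · have : (k + 1) % 2 = 0 := by omega
        simp only [hk2, if_neg, this, if_pos rfl, if_false] at hstep ⊢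
        cases hcb : c ⟨0, hm⟩ <;> cases hcx : c ⟨k+1, h⟩ <;> simp_all
  intro hpar
  have hx := key x.val x.isLt
  have hy := key y.val y.isLt
  simp only [Fin.eta] at hx hy
  rw [hpar] at hx
  exact hc (hx.trans hy.symm)

lemma even_crossdeg {m : ℕ} (f : Fin m → Fin m) (hinv : Function.Involutive f)
    (hpar : ∀ x : Fin m, (x:ℕ) % 2 ≠ ((f x):ℕ) % 2) (u : Fin m) (hu : u < f u) :
    Even ((Finset.univ.filter (fun k => k < f k ∧ k ≠ u ∧
      (((u:ℕ)<(k:ℕ) ∧ (k:ℕ)<((f u):ℕ) ∧ ((f u):ℕ)<((f k):ℕ)) ∨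
       ((k:ℕ)<(u:ℕ) ∧ (u:ℕ)<((f k):ℕ) ∧ ((f k):ℕ)<((f u):ℕ))))).card) := by
  classical
  set T : Finset (Fin m) := Finset.Ioo u (f u) with hT
  have hmemT : ∀ x : Fin m, x ∈ T ↔ (u:ℕ) < (x:ℕ) ∧ (x:ℕ) < ((f u):ℕ) := by
    intro x; rw [hT, Finset.mem_Ioo, Fin.lt_def, Fin.lt_def]
  set A : Finset (Fin m) := T.filter (fun x => f x ∈ T) with hA
  set B : Finset (Fin m) := T.filter (fun x => f x ∉ T) with hB
  have hTcard : T.card = ((f u):ℕ) - (u:ℕ) - 1 := Fin.card_Ioo u (f u)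
  have hTeven : Even T.card := by
    have := hpar u
    have hval : (u:ℕ) < ((f u):ℕ) := Fin.lt_def.1 hu
    rw [hTcard, Nat.even_iff]; omega
  have hAeven : Even A.card := by
    refine even_card_invol f A ?_ ?_ ?_
    · intro x hx
      rw [hA, Finset.mem_filter] at hx ⊢
      exact ⟨hx.2, by rw [hinv x]; exact hx.1⟩
    · intro x _; exact hinv x
    · intro x _
      intro h'
      exact hpar x (by rw [h'])
  have hsplit : A.card + B.card = T.card :=
    Finset.card_filter_add_card_filter_not (p := fun x => f x ∈ T)
  have hBeven : Even B.card := by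
    rw [Nat.even_iff] at *
    omega
  -- bijection between the filter set and B
  have hcardeq : (Finset.univ.filter (fun k => k < f k ∧ k ≠ u ∧
      (((u:ℕ)<(k:ℕ) ∧ (k:ℕ)<((f u):ℕ) ∧ ((f u):ℕ)<((f k):ℕ)) ∨
       ((k:ℕ)<(u:ℕ) ∧ (u:ℕ)<((f k):ℕ) ∧ ((f k):ℕ)<((f u):ℕ))))).card = B.card := by
    apply Finset.card_bij' (fun k _ => if k ∈ T then k else f k)
      (fun x _ => if x < f x then x else f x)
    · -- maps into B
      intro k hk
      rw [Finset.mem_filter] at hk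
      obtain ⟨-, hkf, hku, hcross⟩ := hk
      by_cases hkT : k ∈ T
      · rw [if_pos hkT, hB, Finset.mem_filter]
        refine ⟨hkT, ?_⟩
        rw [hmemT] at hkT ⊢
        rcases hcross with ⟨h1, h2, h3⟩ | ⟨h1, h2, h3⟩ <;> omega
      · rw [if_neg hkT]
        rw [hmemT] at hkT
        rw [hB, Finset.mem_filter]
        have hkfv := Fin.lt_def.1 hkf
        constructor
        · rw [hmemT]
          rcases hcross with ⟨h1, h2, h3⟩ | ⟨h1, h2, h3⟩ <;> omega
        · rw [hinv k, hmemT]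
          exact hkT
    · -- maps back into the filter set
      intro x hx
      rw [hB, Finset.mem_filter, hmemT, hmemT] at hx
      obtain ⟨⟨hx1, hx2⟩, hxf⟩ := hx
      have hfxu : ((f x):ℕ) ≠ (u:ℕ) := by
        intro h'
        have : f x = u := Fin.ext h'
        have : x = f u := by rw [← this, hinv x]
        rw [this] at hx2; omega
      have hfxfu : ((f x):ℕ) ≠ ((f u):ℕ) := by
        intro h'
        have : f x = f u := Fin.ext h'
        have := hinv.injective this
        rw [this] at hx1; omega
      have hxfx : (x:ℕ) ≠ ((f x):ℕ) := fun h' => hpar x (by rw [h'])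
      rcases Nat.lt_or_ge (x:ℕ) ((f x):ℕ) with hlt | hge
      · rw [if_pos (Fin.lt_def.2 hlt), Finset.mem_filter]
        refine ⟨Finset.mem_univ _, Fin.lt_def.2 hlt, ?_, ?_⟩
        · intro h'; rw [h'] at hx1; omega
        · left; refine ⟨hx1, hx2, ?_⟩
          omega
      · have hlt : ((f x):ℕ) < (x:ℕ) := by omega
        rw [if_neg (by rw [Fin.lt_def]; omega), Finset.mem_filter, hinv x]
        refine ⟨Finset.mem_univ _, Fin.lt_def.2 hlt, ?_, ?_⟩
        · intro h'
          have hx' : x = f u := by rw [← h', hinv x]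
          rw [hx'] at hx2
          omega
        · right
          refine ⟨?_, hx1, hx2⟩
          omega
    · -- left inverse
      intro k hk
      rw [Finset.mem_filter] at hk
      obtain ⟨-, hkf, hku, hcross⟩ := hk
      by_cases hkT : k ∈ T
      · rw [if_pos hkT, if_pos hkf]
      · rw [if_neg hkT]
        have : ¬ (f k < f (f k)) := by
          rw [hinv k, Fin.lt_def]
          have := Fin.lt_def.1 hkf; omega
        rw [if_neg this, hinv k]
    · -- right inverse
      intro x hx
      rw [hB, Finset.mem_filter, hmemT, hmemT] at hx
      obtain ⟨⟨hx1, hx2⟩, hxf⟩ := hx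
      by_cases hxfx : x < f x
      · rw [if_pos hxfx, if_pos (by rw [hmemT]; exact ⟨hx1, hx2⟩)]
      · rw [if_neg hxfx]
        have hfxT : f x ∉ T := by rw [hmemT]; omega
        rw [if_neg hfxT, hinv x]
  rw [hcardeq]
  exact hBeven

lemma three_le_nat_card {α : Type*} [Finite α] (x y z : α) (hxy : x ≠ y) (hxz : x ≠ z)
    (hyz : y ≠ z) : 3 ≤ Nat.card α := by
  have : Fintype α := Fintype.ofFinite α
  rw [Nat.card_eq_fintype_card]
  classical
  have h3 : ({x, y, z} : Finset α).card = 3 := by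
    rw [Finset.card_insert_of_notMem (by simp [hxy, hxz]),
      Finset.card_insert_of_notMem (by simp [hyz]), Finset.card_singleton]
  calc 3 = ({x, y, z} : Finset α).card := h3.symm
    _ ≤ Finset.univ.card := Finset.card_le_univ _
    _ = Fintype.card α := Finset.card_univ

end Stmt11Aux

/-- An alternately colored bichromatic convex point set admits no
bichromatic perfect matching with exactly 1 crossing and none with exactly 2. -/
theorem stmt11 (n : ℕ)
    (p : Fin (2 * n) → ℝ × ℝ) (c : Fin (2 * n) → Bool)
    (hconv : ConvexCW (2 * n) p) (hcol : Bichrom n c) (halt : Alternating (2 * n) c) :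
    ∀ f : Fin (2 * n) → Fin (2 * n), IsBPM (2 * n) c f →
      crNum (2 * n) p f ≠ 1 ∧ crNum (2 * n) p f ≠ 2 := by
  intro f hf
  obtain ⟨hinv, hfix, hcolf⟩ := hf
  have main : crNum (2 * n) p f = 0 ∨ 3 ≤ crNum (2 * n) p f := by
    by_cases hne : Nonempty {q : Fin (2 * n) × Fin (2 * n) //
        q.1 < q.2 ∧ q.1 < f q.1 ∧ q.2 < f q.2 ∧
        SegCross (p q.1) (p (f q.1)) (p q.2) (p (f q.2))}
    · right
      obtain ⟨⟨⟨a, b⟩, hab, ha, hb, hseg⟩⟩ := hne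
      simp only at hab ha hb hseg
      -- parity of matched endpoints differs
      have hpar : ∀ x : Fin (2 * n), (x:ℕ) % 2 ≠ ((f x):ℕ) % 2 :=
        fun x => alt_parity_ne halt (Ne.symm (hcolf x))
      -- endpoints of distinct edges are pairwise distinct
      have hdistinct : ∀ u v : Fin (2 * n), u < f u → v < f v → u ≠ v →
          (u:ℕ) ≠ ((f v):ℕ) ∧ ((f u):ℕ) ≠ (v:ℕ) ∧ ((f u):ℕ) ≠ ((f v):ℕ) := by
        intro u v hu hv huv
        refine ⟨?_, ?_, ?_⟩
        · intro h'
          have h1 : u = f v := Fin.ext h'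
          have h2 : f u = v := by rw [h1, hinv v]
          rw [h2] at hu
          rw [← h1] at hv
          exact absurd hu (lt_asymm hv)
        · intro h'
          have h2 : f u = v := Fin.ext h'
          have h1 : u = f v := by rw [← h2, hinv u]
          rw [h2] at hu
          rw [← h1] at hv
          exact absurd hu (lt_asymm hv)
        · intro h'
          exact huv (hinv.injective (Fin.ext h'))
      have hcrossiff : ∀ u v : Fin (2 * n), u < f u → v < f v → u ≠ v →
          ((SegCross (p u) (p (f u)) (p v) (p (f v))) ↔
          (((u:ℕ)<(v:ℕ) ∧ (v:ℕ)<((f u):ℕ) ∧ ((f u):ℕ)<((f v):ℕ)) ∨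
           ((v:ℕ)<(u:ℕ) ∧ (u:ℕ)<((f v):ℕ) ∧ ((f v):ℕ)<((f u):ℕ)))) := by
        intro u v hu hv huv
        obtain ⟨d1, d2, d3⟩ := hdistinct u v hu hv huv
        exact segCross_iff_interleave hconv (Fin.lt_def.1 hu) (Fin.lt_def.1 hv)
          (fun h => huv (Fin.ext h)) d1 d2 d3
      set N : Fin (2 * n) → Finset (Fin (2 * n)) := fun u =>
        Finset.univ.filter (fun k => k < f k ∧ k ≠ u ∧
          (((u:ℕ)<(k:ℕ) ∧ (k:ℕ)<((f u):ℕ) ∧ ((f u):ℕ)<((f k):ℕ)) ∨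
           ((k:ℕ)<(u:ℕ) ∧ (u:ℕ)<((f k):ℕ) ∧ ((f k):ℕ)<((f u):ℕ)))) with hN
      have habne : a ≠ b := ne_of_lt hab
      have hcrossab := (hcrossiff a b ha hb habne).1 hseg
      have hmemNa : b ∈ N a := by
        rw [hN, Finset.mem_filter]
        exact ⟨Finset.mem_univ _, hb, habne.symm, hcrossab⟩
      have hmemNb : a ∈ N b := by
        rw [hN, Finset.mem_filter]
        refine ⟨Finset.mem_univ _, ha, habne, ?_⟩
        rcases hcrossab with h | h
        · right; exact h
        · left; exact h
      have h1a : 1 < (N a).card := by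
        have hpos : 0 < (N a).card := Finset.card_pos.2 ⟨b, hmemNa⟩
        have hev : Even (N a).card := even_crossdeg f hinv hpar a ha
        rw [Nat.even_iff] at hev; omega
      have h1b : 1 < (N b).card := by
        have hpos : 0 < (N b).card := Finset.card_pos.2 ⟨a, hmemNb⟩
        have hev : Even (N b).card := even_crossdeg f hinv hpar b hb
        rw [Nat.even_iff] at hev; omega
      obtain ⟨b', hb'mem, hb'ne⟩ := Finset.exists_mem_ne h1a b
      obtain ⟨a', ha'mem, ha'ne⟩ := Finset.exists_mem_ne h1b a
      rw [hN, Finset.mem_filter] at hb'mem ha'mem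
      obtain ⟨-, hb'f, hb'a, hb'cross⟩ := hb'mem
      obtain ⟨-, ha'f, ha'b, ha'cross⟩ := ha'mem
      -- build the three crossing pairs as subtype elements
      have mk : ∀ u v : Fin (2 * n), u < f u → v < f v → u ≠ v →
          (((u:ℕ)<(v:ℕ) ∧ (v:ℕ)<((f u):ℕ) ∧ ((f u):ℕ)<((f v):ℕ)) ∨
           ((v:ℕ)<(u:ℕ) ∧ (u:ℕ)<((f v):ℕ) ∧ ((f v):ℕ)<((f u):ℕ))) →
          ((if u < v then ((u, v) : Fin (2*n) × Fin (2*n)) else (v, u)).1 <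
              (if u < v then ((u, v) : Fin (2*n) × Fin (2*n)) else (v, u)).2 ∧
            (if u < v then ((u, v) : Fin (2*n) × Fin (2*n)) else (v, u)).1 <
              f (if u < v then ((u, v) : Fin (2*n) × Fin (2*n)) else (v, u)).1 ∧
            (if u < v then ((u, v) : Fin (2*n) × Fin (2*n)) else (v, u)).2 <
              f (if u < v then ((u, v) : Fin (2*n) × Fin (2*n)) else (v, u)).2 ∧
            SegCross (p (if u < v then ((u, v) : Fin (2*n) × Fin (2*n)) else (v, u)).1)
              (p (f (if u < v then ((u, v) : Fin (2*n) × Fin (2*n)) else (v, u)).1))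
              (p (if u < v then ((u, v) : Fin (2*n) × Fin (2*n)) else (v, u)).2)
              (p (f (if u < v then ((u, v) : Fin (2*n) × Fin (2*n)) else (v, u)).2))) := by
        intro u v hu hv huv hcross
        by_cases huvlt : u < v
        · rw [if_pos huvlt]
          exact ⟨huvlt, hu, hv, (hcrossiff u v hu hv huv).2 hcross⟩
        · rw [if_neg huvlt]
          have hvu : v < u := lt_of_le_of_ne (not_lt.1 huvlt) (fun h => huv (id h).symm)
          refine ⟨hvu, hv, hu, (hcrossiff v u hv hu (ne_of_lt hvu)).2 ?_⟩
          rcases hcross with h | h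
          · right; exact h
          · left; exact h
      set q1 : Fin (2*n) × Fin (2*n) := (a, b) with hq1
      set q2 : Fin (2*n) × Fin (2*n) := if a < b' then (a, b') else (b', a) with hq2
      set q3 : Fin (2*n) × Fin (2*n) := if a' < b then (a', b) else (b, a') with hq3
      have hP1 : q1.1 < q1.2 ∧ q1.1 < f q1.1 ∧ q1.2 < f q1.2 ∧
          SegCross (p q1.1) (p (f q1.1)) (p q1.2) (p (f q1.2)) :=
        ⟨hab, ha, hb, hseg⟩
      have hP2 : q2.1 < q2.2 ∧ q2.1 < f q2.1 ∧ q2.2 < f q2.2 ∧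
          SegCross (p q2.1) (p (f q2.1)) (p q2.2) (p (f q2.2)) := by
        have := mk a b' ha hb'f hb'a.symm hb'cross
        rw [hq2]; exact this
      have hP3 : q3.1 < q3.2 ∧ q3.1 < f q3.1 ∧ q3.2 < f q3.2 ∧
          SegCross (p q3.1) (p (f q3.1)) (p q3.2) (p (f q3.2)) := by
        have := mk a' b ha'f hb ha'b (by
          rcases ha'cross with h | h
          · right; exact h
          · left; exact h)
        rw [hq3]; exact this
      -- distinctness
      have hne12 : q1 ≠ q2 := by
        rw [hq1, hq2]
        by_cases h : a < b'
        · rw [if_pos h]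
          intro he
          rw [Prod.mk.injEq] at he
          exact hb'ne he.2.symm
        · rw [if_neg h]
          intro he
          rw [Prod.mk.injEq] at he
          exact hb'a he.1.symm
      have hne13 : q1 ≠ q3 := by
        rw [hq1, hq3]
        by_cases h : a' < b
        · rw [if_pos h]
          intro he
          rw [Prod.mk.injEq] at he
          exact ha'ne he.1.symm
        · rw [if_neg h]
          intro he
          rw [Prod.mk.injEq] at he
          exact habne he.1
      have hne23 : q2 ≠ q3 := by
        rw [hq2, hq3]
        by_cases h2 : a < b' <;> by_cases h3 : a' < b
        · rw [if_pos h2, if_pos h3]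
          intro he
          rw [Prod.mk.injEq] at he
          exact ha'ne he.1.symm
        · rw [if_pos h2, if_neg h3]
          intro he
          rw [Prod.mk.injEq] at he
          exact habne he.1
        · rw [if_neg h2, if_pos h3]
          intro he
          rw [Prod.mk.injEq] at he
          exact habne he.2
        · rw [if_neg h2, if_neg h3]
          intro he
          rw [Prod.mk.injEq] at he
          exact hb'ne he.1
      rw [crNum]
      exact three_le_nat_card ⟨q1, hP1⟩ ⟨q2, hP2⟩ ⟨q3, hP3⟩
        (fun h => hne12 (congrArg Subtype.val h))
        (fun h => hne13 (congrArg Subtype.val h))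
        (fun h => hne23 (congrArg Subtype.val h))
    · left
      rw [crNum]
      haveI := not_nonempty_iff.1 hne
      exact Nat.card_of_isEmpty
  constructor <;> intro h <;> omega
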